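/- arXiv:2312.04689 — 2 statements merged into one kernel-verified Lean document; each statement's English description precedes it below -/
import Mathlib

section
/- Let (X, ℤ) be a minimal dynamical system on a compact metric space X, U ⊆ X a nonempty open set, φ : X → [0,1] continuous with φ = 1 on X \ U and φ⁻¹(0) having nonempty interior, and let ξ : X → ℝ be the associated Lindenstrauss level function ξ(x) = Σ_{j≥1} j·φ(x)φ(x−1)⋯φ(x−j+1)(1−φ(x−j)). Then ξ(x+1) = φ(x+1)·(ξ(x)+1) for every x ∈ X. -/
/-- The action of `z ∈ ℤ` on `X` generated by the homeomorphism `T`:  `x + z = T^z x`. -/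
def actZ {X : Type*} [TopologicalSpace X] (T : X ≃ₜ X) (z : ℤ) (x : X) : X :=
  (T.toEquiv ^ z) x

/-- The `j`-th term of the series defining Lindenstrauss' level function:
`j · φ(x)·φ(x−1)⋯φ(x−j+1)·(1−φ(x−j))`. -/
noncomputable def levelTerm {X : Type*} [TopologicalSpace X] (T : X ≃ₜ X)
    (φ : X → ℝ) (j : ℕ) (x : X) : ℝ :=
  (j : ℝ) * (∏ i ∈ Finset.range j, φ (actZ T (-(i : ℤ)) x)) * (1 - φ (actZ T (-(j : ℤ)) x))

/-!
Writing `S j x = φ(x)φ(x-1)⋯φ(x-j+1)` (`survivalProb`) for the probability that the walk started at `x` makes at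
least `j` steps, the `j`-th term of `ξ` is `j (S j x - S (j+1) x)`. Minimality and compactness
make every backward orbit enter the open set where `φ` vanishes, so `S j x` is eventually zero
and Abel summation gives `ξ x = Σ_{j ≥ 1} S j x`. The recursion then follows from
`S (j+1) (x+1) = φ(x+1) S j x`.
-/

open Finset

lemma sum_range_mul_sub_eq {R : Type*} [CommRing R] (P : ℕ → R) (n : ℕ) :
    ∑ j ∈ range n, (j : R) * (P j - P (j + 1)) = ∑ j ∈ range n, P (j + 1) - n * P n := by
  induction n with
  | zero => simp
  | succ n ih =>
    rw [sum_range_succ, sum_range_succ, ih]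
    push_cast
    ring

lemma tsum_mul_sub_eq_sum {R : Type*} [CommRing R] [TopologicalSpace R] {P : ℕ → R} {n : ℕ}
    (hP : ∀ m ≥ n, P m = 0) :
    ∑' j : ℕ, (j : R) * (P j - P (j + 1)) = ∑ j ∈ range n, P (j + 1) := by
  rw [tsum_eq_sum (s := range n), sum_range_mul_sub_eq, hP n le_rfl, mul_zero, sub_zero]
  intro j hj
  rw [mem_range, not_lt] at hj
  rw [hP j hj, hP (j + 1) (by omega), sub_self, mul_zero]

section MinimalSystem

variable {X : Type*} [TopologicalSpace X] (T : X ≃ₜ X)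

lemma actZ_add (a b : ℤ) (x : X) : actZ T a (actZ T b x) = actZ T (a + b) x := by
  rw [actZ, actZ, actZ, zpow_add, Equiv.Perm.mul_apply]

lemma continuous_actZ (z : ℤ) : Continuous (actZ T z) := by
  induction z using Int.induction_on with
  | zero => exact continuous_id
  | succ n ih =>
    have h : actZ T (n + 1) = T ∘ actZ T n := funext fun x ↦ by
      rw [add_comm, ← actZ_add]; rfl
    exact h ▸ T.continuous.comp ih
  | pred n ih =>
    have h : actZ T (-n - 1) = T.symm ∘ actZ T (-n) := funext fun x ↦ by
      rw [sub_eq_neg_add, ← actZ_add]; rfl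
    exact h ▸ T.symm.continuous.comp ih

variable [CompactSpace X] (hmin : ∀ x : X, Dense (Set.range fun z : ℤ => actZ T z x))
  {V : Set X} (hV : IsOpen V) (hVne : V.Nonempty)
include hmin hV hVne

/-- The translates `actZ T z ⁻¹' V` cover `X`; a finite subcover bounds the entrance times. -/
lemma exists_forall_exists_le_actZ_mem : ∃ M : ℤ, ∀ x, ∃ z ≤ M, actZ T z x ∈ V := by
  have hcover : Set.univ ⊆ ⋃ z : ℤ, actZ T z ⁻¹' V := fun x _ ↦ by
    obtain ⟨_, ⟨z, rfl⟩, hz⟩ := (hmin x).exists_mem_open hV hVne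
    exact Set.mem_iUnion.2 ⟨z, hz⟩
  obtain ⟨F, hF⟩ := isCompact_univ.elim_finite_subcover _
    (fun z ↦ hV.preimage (continuous_actZ T z)) hcover
  obtain ⟨M, hM⟩ := F.exists_le
  refine ⟨M, fun x ↦ ?_⟩
  obtain ⟨z, hzF, hz⟩ := Set.mem_iUnion₂.1 (hF (Set.mem_univ x))
  exact ⟨z, hM z hzF, hz⟩

lemma exists_actZ_neg_mem (x : X) : ∃ k : ℕ, actZ T (-k) x ∈ V := by
  obtain ⟨M, hM⟩ := exists_forall_exists_le_actZ_mem T hmin hV hVne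
  obtain ⟨z, hzM, hz⟩ := hM (actZ T (-M) x)
  refine ⟨(M - z).toNat, ?_⟩
  rwa [actZ_add, show z + -M = -((M - z).toNat : ℤ) by omega] at hz

end MinimalSystem

section LevelFunction

variable {X : Type*} [TopologicalSpace X] (T : X ≃ₜ X) (φ : X → ℝ)

noncomputable def survivalProb (j : ℕ) (x : X) : ℝ :=
  ∏ i ∈ range j, φ (actZ T (-(i : ℤ)) x)

lemma levelTerm_eq (j : ℕ) (x : X) :
    levelTerm T φ j x = j * (survivalProb T φ j x - survivalProb T φ (j + 1) x) := by
  rw [levelTerm, survivalProb, survivalProb, prod_range_succ]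
  ring

lemma survivalProb_zero (x : X) : survivalProb T φ 0 x = 1 := prod_range_zero _

lemma survivalProb_succ_actZ_one (j : ℕ) (x : X) :
    survivalProb T φ (j + 1) (actZ T 1 x) = φ (actZ T 1 x) * survivalProb T φ j x := by
  rw [survivalProb, prod_range_succ', mul_comm, survivalProb]
  congr 1
  exact prod_congr rfl fun i _ ↦ by rw [actZ_add]; congr 2; push_cast; ring

lemma survivalProb_eq_zero {k : ℕ} {x : X} (hk : φ (actZ T (-(k : ℤ)) x) = 0) {m : ℕ}
    (hm : k < m) : survivalProb T φ m x = 0 :=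
  prod_eq_zero (mem_range.2 hm) hk

lemma tsum_levelTerm_eq_sum {k : ℕ} {x : X} (hk : φ (actZ T (-(k : ℤ)) x) = 0) :
    ∑' j : ℕ, levelTerm T φ j x = ∑ j ∈ range (k + 1), survivalProb T φ (j + 1) x := by
  simp_rw [levelTerm_eq]
  exact tsum_mul_sub_eq_sum fun m hm ↦ survivalProb_eq_zero T φ hk hm

end LevelFunction

theorem stmt_8_general {X : Type*} [MetricSpace X] [CompactSpace X]
    (T : X ≃ₜ X)
    (hmin : ∀ x : X, Dense (Set.range fun z : ℤ => actZ T z x))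
    (φ : X → ℝ)
    (hφ0 : (interior (φ ⁻¹' {0})).Nonempty)
    -- ξ is the Lindenstrauss level function
    (ξ : X → ℝ) (hξ : ∀ x, ξ x = ∑' j : ℕ, levelTerm T φ j x) :
    ∀ x : X, ξ (actZ T 1 x) = φ (actZ T 1 x) * (ξ x + 1) := by
  intro x
  obtain ⟨k, hkV⟩ := exists_actZ_neg_mem T hmin isOpen_interior hφ0 x
  have hk : φ (actZ T (-(k : ℤ)) x) = 0 := interior_subset (s := φ ⁻¹' {0}) hkV
  have hk' : φ (actZ T (-((k + 1 : ℕ) : ℤ)) (actZ T 1 x)) = 0 := by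
    rwa [actZ_add, show -((k + 1 : ℕ) : ℤ) + 1 = -(k : ℤ) by push_cast; ring]
  rw [hξ, hξ, tsum_levelTerm_eq_sum T φ hk', tsum_levelTerm_eq_sum T φ hk]
  simp_rw [survivalProb_succ_actZ_one]
  rw [← mul_sum, sum_range_succ' (survivalProb T φ · x), survivalProb_zero]

theorem stmt_8 {X : Type*} [MetricSpace X] [CompactSpace X]
    (T : X ≃ₜ X)
    (hmin : ∀ x : X, Dense (Set.range fun z : ℤ => actZ T z x))
    (U : Set X) (hUopen : IsOpen U) (hUne : U.Nonempty)
    (φ : X → ℝ) (hφcont : Continuous φ) (hφ01 : ∀ x, φ x ∈ Set.Icc (0 : ℝ) 1)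
    (hφU : ∀ x ∉ U, φ x = 1)
    (hφ0 : (interior (φ ⁻¹' {0})).Nonempty)
    -- ξ is the Lindenstrauss level function
    (ξ : X → ℝ) (hξ : ∀ x, ξ x = ∑' j : ℕ, levelTerm T φ j x) :
    ∀ x : X, ξ (actZ T 1 x) = φ (actZ T 1 x) * (ξ x + 1) :=
  stmt_8_general T hmin φ hφ0 ξ hξ
end

section
/- Let (X, ℤ) be a minimal dynamical system on a compact metric space X, U ⊆ X open nonempty, φ : X → [0,1] continuous with φ = 1 outside U and φ⁻¹(0) having nonempty interior, and let ξ be the Lindenstrauss level function satisfying ξ(x+1) = φ(x+1)(ξ(x)+1). Then for every natural number n and every x ∈ X not belonging to (U−n) ∪ (U−n+1) ∪ ⋯ ∪ (U+n), one has ξ(x+z) = ξ(x) + z for every integer z with −n ≤ z ≤ n. -/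
lemma actZ_actZ {X : Type*} [TopologicalSpace X] (T : X ≃ₜ X) (a b : ℤ) (x : X) :
    actZ T a (actZ T b x) = actZ T (a + b) x := by
  simp [actZ, zpow_add, Equiv.Perm.mul_apply]

theorem stmt_9 {X : Type*} [MetricSpace X] [CompactSpace X]
    (T : X ≃ₜ X)
    (hmin : ∀ x : X, Dense (Set.range fun z : ℤ => actZ T z x))
    (U : Set X) (hUopen : IsOpen U) (hUne : U.Nonempty)
    (φ : X → ℝ) (hφcont : Continuous φ) (hφ01 : ∀ x, φ x ∈ Set.Icc (0 : ℝ) 1)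
    (hφU : ∀ x ∉ U, φ x = 1)
    (hφ0 : (interior (φ ⁻¹' {0})).Nonempty)
    -- ξ is the Lindenstrauss level function, satisfying ξ(x+1) = φ(x+1)(ξ(x)+1)
    (ξ : X → ℝ) (hξcont : Continuous ξ)
    (hξ : ∀ x, ξ (actZ T 1 x) = φ (actZ T 1 x) * (ξ x + 1)) :
    ∀ n : ℕ, ∀ x : X,
      -- x does not belong to (U−n) ∪ ⋯ ∪ (U+n)
      (∀ z : ℤ, |z| ≤ (n : ℤ) → x ∉ (actZ T z) '' U) →
      ∀ z : ℤ, |z| ≤ (n : ℤ) → ξ (actZ T z x) = ξ x + z := by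
  intro n x hx
  have hφ1 : ∀ z : ℤ, |z| ≤ (n : ℤ) → φ (actZ T z x) = 1 := by
    intro z hz
    apply hφU
    intro hmem
    exact hx (-z) (by rwa [abs_neg]) ⟨actZ T z x, hmem, by rw [actZ_actZ]; simp [actZ]⟩
  -- positive direction
  have hpos : ∀ k : ℕ, (k : ℤ) ≤ n → ξ (actZ T k x) = ξ x + k := by
    intro k
    induction k with
    | zero => intro _; simp [actZ]
    | succ k ih =>
      intro hk
      have hk' : (k : ℤ) ≤ n := by omega
      have h1 : actZ T ((k : ℤ) + 1) x = actZ T 1 (actZ T k x) := by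
        rw [actZ_actZ, add_comm]
      rw [show ((k + 1 : ℕ) : ℤ) = (k : ℤ) + 1 by push_cast; ring, h1, hξ, ← h1]
      rw [hφ1 _ (by rw [abs_of_nonneg (by positivity)]; omega), ih hk']
      push_cast; ring
  have hneg : ∀ k : ℕ, (k : ℤ) ≤ n → ξ (actZ T (-k) x) = ξ x - k := by
    intro k
    induction k with
    | zero => intro _; simp [actZ]
    | succ k ih =>
      intro hk
      have hk' : (k : ℤ) ≤ n := by omega
      have h1 : actZ T (-(k : ℤ)) x = actZ T 1 (actZ T (-((k : ℕ) + 1 : ℕ)) x) := by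
        rw [actZ_actZ]; congr 1; push_cast; ring
      have := hξ (actZ T (-((k : ℕ) + 1 : ℕ)) x)
      rw [← h1] at this
      rw [hφ1 _ (by rw [abs_neg, abs_of_nonneg (by positivity)]; omega), one_mul,
        ih hk'] at this
      have : ξ (actZ T (-((k : ℕ) + 1 : ℕ)) x) = ξ x - k - 1 := by linarith
      rw [this]; push_cast; ring
  intro z hz
  rcases le_or_gt 0 z with h | h
  · lift z to ℕ using h
    exact hpos z (by simpa using hz)
  · obtain ⟨k, rfl⟩ : ∃ k : ℕ, z = -k := ⟨z.natAbs, by omega⟩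
    rw [hneg k (by rw [abs_neg, abs_of_nonneg (by positivity)] at hz; exact hz)]
    push_cast; ring
end
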